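/- arXiv:1611.05264 — 4 statements merged into one kernel-verified Lean document; each statement's English description precedes it below -/
import Mathlib

section
/- On the 7-dimensional nilpotent Lie algebra g₂ = (0,0,0,0,23,34,36) (i.e., with de⁵ = e²³, de⁶ = e³⁴, de⁷ = e³⁶, de^i = 0 for i ≤ 4), every closed 4-form κ satisfies (ι_{e₅} ι_{e₇} κ)² = 0. -/
open scoped BigOperators

noncomputable section

/-- The basis `k`-form `e^{S 0} ∧ ⋯ ∧ e^{S (k-1)}` on `Fin n → ℝ` (determinant of the
selected coordinates). -/
def eForm {n k : ℕ} (S : Fin k → Fin n) :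
    AlternatingMap ℝ (Fin n → ℝ) ℝ (Fin k) :=
  (Matrix.detRowAlternating :
      AlternatingMap ℝ (Fin k → ℝ) ℝ (Fin k)).compLinearMap (LinearMap.funLeft ℝ ℝ S)

/-- The basis form `f^{S 0} ∧ ⋯`, in the coframe dual to a basis `b` of `V`. -/
def eFormB {V : Type*} [AddCommGroup V] [Module ℝ V] {n k : ℕ}
    (b : Module.Basis (Fin n) ℝ V) (S : Fin k → Fin n) : AlternatingMap ℝ V ℝ (Fin k) :=
  (eForm S).compLinearMap b.equivFun.toLinearMap

/-- Value of the wedge product `α ∧ β` at a tuple of vectors. -/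
def wedgeVal {V : Type*} [AddCommGroup V] [Module ℝ V] {p q : ℕ}
    (α : AlternatingMap ℝ V ℝ (Fin p)) (β : AlternatingMap ℝ V ℝ (Fin q))
    (x : Fin (p + q) → V) : ℝ :=
  ((p.factorial * q.factorial : ℕ) : ℝ)⁻¹ *
    ∑ σ : Equiv.Perm (Fin (p + q)),
      ((Equiv.Perm.sign σ : ℤ) : ℝ) *
        (α fun i => x (σ (Fin.castAdd q i))) * (β fun j => x (σ (Fin.natAdd p j)))

/-- Value of the triple wedge product `α ∧ β ∧ γ` at a tuple of vectors. -/
def wedge3Val {V : Type*} [AddCommGroup V] [Module ℝ V] {p q r : ℕ}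
    (α : AlternatingMap ℝ V ℝ (Fin p)) (β : AlternatingMap ℝ V ℝ (Fin q))
    (γ : AlternatingMap ℝ V ℝ (Fin r)) (x : Fin (p + q + r) → V) : ℝ :=
  ((p.factorial * q.factorial * r.factorial : ℕ) : ℝ)⁻¹ *
    ∑ σ : Equiv.Perm (Fin (p + q + r)),
      ((Equiv.Perm.sign σ : ℤ) : ℝ) *
        (α fun i => x (σ (Fin.castAdd r (Fin.castAdd q i)))) *
        (β fun j => x (σ (Fin.castAdd r (Fin.natAdd p j)))) *
        (γ fun l => x (σ (Fin.natAdd (p + q) l)))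

/-- Value of the Chevalley–Eilenberg differential of a `(k+1)`-form at a `(k+2)`-tuple of
vectors, for the Lie bracket `B`:
`(dκ)(x₀,…,x_{k+1}) = ∑_{i<j} (-1)^{i+j} κ([xᵢ,xⱼ], x₀,…,x̂ᵢ,…,x̂ⱼ,…)`. -/
def ceDVal {V : Type*} [AddCommGroup V] [Module ℝ V] (B : V → V → V) {k : ℕ}
    (κ : AlternatingMap ℝ V ℝ (Fin (k + 1))) (x : Fin (k + 2) → V) : ℝ :=
  ∑ i : Fin (k + 2), ∑ m : Fin (k + 1),
    if (i : ℕ) ≤ (m : ℕ) then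
      (-1 : ℝ) ^ ((i : ℕ) + ((i.succAbove m : Fin (k + 2)) : ℕ)) *
        κ (Fin.cons (B (x i) (x (i.succAbove m)))
            fun l : Fin k => x (i.succAbove (m.succAbove l)))
    else 0

/-- Inner product of `k`-forms on `Fin n → ℝ` making the standard basis forms orthonormal. -/
def formInner {n k : ℕ} (α β : AlternatingMap ℝ (Fin n → ℝ) ℝ (Fin k)) : ℝ :=
  ((k.factorial : ℕ) : ℝ)⁻¹ *
    ∑ f : Fin k → Fin n, (α fun i => Pi.single (f i) 1) * (β fun i => Pi.single (f i) 1)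

/-- Inner product of `k`-forms on `V` for which the coframe dual to `b` is orthonormal. -/
def formInnerB {V : Type*} [AddCommGroup V] [Module ℝ V] {n k : ℕ}
    (b : Module.Basis (Fin n) ℝ V) (α β : AlternatingMap ℝ V ℝ (Fin k)) : ℝ :=
  ((k.factorial : ℕ) : ℝ)⁻¹ *
    ∑ f : Fin k → Fin n, (α fun i => b (f i)) * (β fun i => b (f i))

/-- The standard positive (`G₂`) 3-form
`e¹²⁷+e³⁴⁷+e⁵⁶⁷+e¹³⁵−e¹⁴⁶−e²³⁶−e²⁴⁵` on `ℝ⁷` (indices written 1-based). -/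
def phiStd : AlternatingMap ℝ (Fin 7 → ℝ) ℝ (Fin 3) :=
  eForm ![0, 1, 6] + eForm ![2, 3, 6] + eForm ![4, 5, 6] + eForm ![0, 2, 4] -
    eForm ![0, 3, 5] - eForm ![1, 2, 5] - eForm ![1, 3, 4]

/-- The standard `G₂` dual 4-form
`e¹²³⁴+e¹²⁵⁶+e¹³⁶⁷+e¹⁴⁵⁷+e²³⁵⁷−e²⁴⁶⁷+e³⁴⁵⁶` on `ℝ⁷`. -/
def psiStd : AlternatingMap ℝ (Fin 7 → ℝ) ℝ (Fin 4) :=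
  eForm ![0, 1, 2, 3] + eForm ![0, 1, 4, 5] + eForm ![0, 2, 5, 6] + eForm ![0, 3, 4, 6] +
    eForm ![1, 2, 4, 6] - eForm ![1, 3, 5, 6] + eForm ![2, 3, 4, 5]

/-- The standard `G₂` 3-form in the coframe dual to a basis `b` of a 7-dimensional space;
a 3-form `φ` is positive (defines a `G₂`-structure) iff `φ = phiStdB b` for some basis `b`,
which is then orthonormal for the induced metric `g_φ`. -/
def phiStdB {V : Type*} [AddCommGroup V] [Module ℝ V] (b : Module.Basis (Fin 7) ℝ V) :
    AlternatingMap ℝ V ℝ (Fin 3) :=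
  phiStd.compLinearMap b.equivFun.toLinearMap

/-- The dual 4-form `⋆_φ φ` of the `G₂`-structure `phiStdB b`. -/
def psiStdB {V : Type*} [AddCommGroup V] [Module ℝ V] (b : Module.Basis (Fin 7) ℝ V) :
    AlternatingMap ℝ V ℝ (Fin 4) :=
  psiStd.compLinearMap b.equivFun.toLinearMap

/-- The standard negative stable 3-form `−f²⁴⁶+f¹³⁶+f¹⁴⁵+f²³⁵` on `ℝ⁶`. -/
def negStd : AlternatingMap ℝ (Fin 6 → ℝ) ℝ (Fin 3) :=
  -eForm ![1, 3, 5] + eForm ![0, 2, 5] + eForm ![0, 3, 4] + eForm ![1, 2, 4]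

/-- The standard negative stable 3-form in the coframe dual to a basis `b`;
a 3-form `ρ` on a 6-dimensional space is negative (λ(ρ)<0) iff `ρ = negStdB b` for some `b`. -/
def negStdB {V : Type*} [AddCommGroup V] [Module ℝ V] (b : Module.Basis (Fin 6) ℝ V) :
    AlternatingMap ℝ V ℝ (Fin 3) :=
  negStd.compLinearMap b.equivFun.toLinearMap

/-- The matrix of the Hitchin endomorphism `K_ρ` of a 3-form `ρ` on a 6-dimensional space,
relative to a basis `b` (trivializing `Λ⁶V*` by the dual volume form of `b`):
`ι_{b c} ρ ∧ ρ = ∑ₐ (−1)ᵃ (kMat b ρ a c) • ι_{b a} vol`. -/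
def kMat {V : Type*} [AddCommGroup V] [Module ℝ V] (b : Module.Basis (Fin 6) ℝ V)
    (ρ : AlternatingMap ℝ V ℝ (Fin 3)) (a c : Fin 6) : ℝ :=
  (-1 : ℝ) ^ (a : ℕ) *
    wedgeVal (ρ.curryLeft (b c)) ρ fun l : Fin 5 => b (a.succAbove l)

/-- The Hitchin quartic invariant `λ(ρ) = (1/6) tr(K_ρ²)`, trivialized by the basis `b`. -/
def lambdaB {V : Type*} [AddCommGroup V] [Module ℝ V] (b : Module.Basis (Fin 6) ℝ V)
    (ρ : AlternatingMap ℝ V ℝ (Fin 3)) : ℝ :=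
  (6 : ℝ)⁻¹ * ∑ a : Fin 6, ∑ c : Fin 6, kMat b ρ a c * kMat b ρ c a

/-- The standard volume form `e¹∧⋯∧e⁷` on `ℝ⁷`. -/
def vol7 : AlternatingMap ℝ (Fin 7 → ℝ) ℝ (Fin 7) :=
  eForm (fun i => i)


/-- The Lie bracket of the nilpotent Lie algebra `g₂ = (0,0,0,0,23,34,36)` on `ℝ⁷`
(so that the Chevalley–Eilenberg differential satisfies `de⁵ = e²³`, `de⁶ = e³⁴`,
`de⁷ = e³⁶`, `deⁱ = 0` for `i ≤ 4`). -/
def brkG2 : (Fin 7 → ℝ) → (Fin 7 → ℝ) → (Fin 7 → ℝ) := fun x y =>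
  ![0, 0, 0, 0, -(x 1 * y 2 - x 2 * y 1), -(x 2 * y 3 - x 3 * y 2), -(x 2 * y 5 - x 5 * y 2)]

/-!
Put `β = ι_{e₅} ι_{e₇} κ`. The only nonzero brackets of `g₂` are `[e₂, e₃] = -e₅`,
`[e₃, e₄] = -e₆` and `[e₃, e₆] = -e₇`, so evaluating `dκ = 0` on suitable quintuples of basis
vectors gives `β(eᵢ, eⱼ) = 0` for all `i, j ≠ 3`. Hence `β = e³ ∧ γ` with `γ = β(e₃, ·)`, and
the square of a decomposable 2-form vanishes.
-/

theorem Fin.cons_eq_vec_four {V : Type*} (a : V) (f : Fin 3 → V) :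
    (Fin.cons a f : Fin 4 → V) = ![a, f 0, f 1, f 2] := by
  ext i; fin_cases i <;> rfl

theorem Equiv.Perm.sum_sign_mul_prod_eq_zero_of_eq {ι V R : Type*} [Fintype ι] [DecidableEq ι]
    [CommRing R] (g : ι → V → R) (x : ι → V) {i j : ι} (hij : i ≠ j) (hg : g i = g j) :
    ∑ σ : Perm ι, (Perm.sign σ : R) * ∏ k, g k (x (σ k)) = 0 := by
  have h := Matrix.det_zero_of_column_eq (M := Matrix.of fun l k => g k (x l)) hij
    fun l => by simp [hg]
  rwa [Matrix.det_apply'] at h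

namespace AlternatingMap

variable {R M N ι : Type*} [CommRing R] [AddCommGroup M] [Module R M] [AddCommGroup N]
  [Module R N]

theorem sum_apply {α κ : Type*} (s : Finset α) (g : α → M [⋀^κ]→ₗ[R] N) (v : κ → M) :
    (∑ a ∈ s, g a) v = ∑ a ∈ s, g a v :=
  map_sum (AddMonoidHom.mk' (fun F : M [⋀^κ]→ₗ[R] N => F v) fun _ _ => rfl) g s

theorem map_vecCons_zero {n : ℕ} (f : M [⋀^Fin n.succ]→ₗ[R] N) (m : Fin n → M) :
    f (Matrix.vecCons 0 m) = 0 :=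
  f.map_coord_zero 0 rfl

theorem map_vecCons_neg {n : ℕ} (f : M [⋀^Fin n.succ]→ₗ[R] N) (m : Fin n → M) (x : M) :
    f (Matrix.vecCons (-x) m) = -f (Matrix.vecCons x m) := by
  simpa using f.map_vecCons_smul m (-1) x

theorem map_vec_two_self (f : M [⋀^Fin 2]→ₗ[R] N) (x : M) : f ![x, x] = 0 :=
  f.map_eq_zero_of_eq (i := 0) (j := 1) _ rfl zero_ne_one

theorem map_vec_two_swap (f : M [⋀^Fin 2]→ₗ[R] N) (x y : M) : f ![x, y] = -f ![y, x] := by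
  rw [← f.map_swap ![y, x] zero_ne_one]
  congr 1
  ext i; fin_cases i <;> rfl

theorem map_vec_four_rotate (f : M [⋀^Fin 4]→ₗ[R] N) (a b c d : M) :
    f ![b, c, d, a] = -f ![a, b, c, d] := by
  have h := f.map_perm ![a, b, c, d] (finRotate 4)
  rw [sign_finRotate, show ((-1 : ℤˣ) ^ (4 - 1)) = -1 by decide, Units.neg_smul, one_smul] at h
  rw [← h]
  congr 1
  ext i; fin_cases i <;> rfl

theorem map_vec_four_single_eq_zero [DecidableEq ι] (f : (ι → R) [⋀^Fin 4]→ₗ[R] N)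
    {i j k l : ι} (h : ¬Function.Injective ![i, j, k, l]) :
    f ![Pi.single i 1, Pi.single j 1, Pi.single k 1, Pi.single l 1] = 0 := by
  refine f.map_eq_zero_of_not_injective _ fun hinj => h (Function.Injective.of_comp
    (f := fun m => (Pi.single m 1 : ι → R)) ?_)
  convert hinj using 1
  ext x; fin_cases x <;> rfl

variable [Fintype ι] [DecidableEq ι]

theorem map_vec_two_eq_sum (f : (ι → R) [⋀^Fin 2]→ₗ[R] N) (a b : ι → R) :
    f ![a, b] = ∑ i, ∑ j, (a i * b j) • f ![Pi.single i 1, Pi.single j 1] := by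
  conv_lhs => rw [pi_eq_sum_univ' a, pi_eq_sum_univ' b]
  simp only [← curryLeft_apply_apply, map_sum, map_smul, sum_apply, smul_apply,
    Finset.smul_sum, smul_smul]

theorem map_vec_two_eq_of_map_single_eq_zero (f : (ι → R) [⋀^Fin 2]→ₗ[R] N) (p : ι)
    (hf : ∀ i j, i ≠ p → j ≠ p → f ![Pi.single i 1, Pi.single j 1] = 0) (a b : ι → R) :
    f ![a, b] = a p • f ![Pi.single p 1, b] - b p • f ![Pi.single p 1, a] := by
  have hsingle : ∀ i j, f ![Pi.single i 1, Pi.single j 1] =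
      (if i = p then f ![Pi.single p 1, Pi.single j 1] else 0) -
        (if j = p then f ![Pi.single p 1, Pi.single i 1] else 0) := by
    intro i j
    by_cases hi : i = p <;> by_cases hj : j = p
    · simp [hi, hj, map_vec_two_self]
    · simp [hi, hj]
    · simp [hi, hj, map_vec_two_swap f (Pi.single i 1)]
    · simp [hi, hj, hf]
  have hrow : ∀ c : ι → R,
      f ![Pi.single p 1, c] = ∑ j, c j • f ![Pi.single p 1, Pi.single j 1] := fun c => by
    simp [map_vec_two_eq_sum f (Pi.single p 1) c, Pi.single_apply]
  rw [map_vec_two_eq_sum f a b, hrow, hrow]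
  rw [Finset.sum_congr rfl fun i _ => Finset.sum_congr rfl fun j _ => by rw [hsingle i j]]
  simp [smul_sub, Finset.sum_sub_distrib, Finset.smul_sum, smul_smul, mul_comm]

end AlternatingMap

open Equiv Perm in
theorem wedgeVal_self_eq_zero {V : Type*} [AddCommGroup V] [Module ℝ V]
    (β : AlternatingMap ℝ V ℝ (Fin 2)) (μ ν : V → ℝ)
    (hβ : ∀ a b, β ![a, b] = μ a * ν b - μ b * ν a) (x : Fin 4 → V) :
    wedgeVal β β x = 0 := by
  have hβ' : ∀ v : Fin 2 → V, β v = μ (v 0) * ν (v 1) - μ (v 1) * ν (v 0) := fun v => by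
    rw [← hβ]; congr 1; ext i; fin_cases i <;> rfl
  have hsum : ∑ σ : Perm (Fin (2 + 2)), ((sign σ : ℤ) : ℝ) *
        (β fun i => x (σ (Fin.castAdd 2 i))) * (β fun j => x (σ (Fin.natAdd 2 j))) =
      ∑ σ : Perm (Fin 4), (sign σ : ℝ) * ∏ k, ![μ, ν, μ, ν] k (x (σ k))
      - ∑ σ : Perm (Fin 4), (sign σ : ℝ) * ∏ k, ![μ, ν, ν, μ] k (x (σ k))
      - ∑ σ : Perm (Fin 4), (sign σ : ℝ) * ∏ k, ![ν, μ, μ, ν] k (x (σ k))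
      + ∑ σ : Perm (Fin 4), (sign σ : ℝ) * ∏ k, ![ν, μ, ν, μ] k (x (σ k)) := by
    simp only [← Finset.sum_sub_distrib, ← Finset.sum_add_distrib]
    refine Finset.sum_congr rfl fun σ _ => ?_
    simp [hβ', Fin.prod_univ_four]
    ring
  rw [wedgeVal, hsum, sum_sign_mul_prod_eq_zero_of_eq _ x (by decide : (0 : Fin 4) ≠ 2) rfl,
    sum_sign_mul_prod_eq_zero_of_eq _ x (by decide : (0 : Fin 4) ≠ 3) rfl,
    sum_sign_mul_prod_eq_zero_of_eq _ x (by decide : (0 : Fin 4) ≠ 3) rfl,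
    sum_sign_mul_prod_eq_zero_of_eq _ x (by decide : (0 : Fin 4) ≠ 2) rfl]
  simp

theorem ceDVal_five {V : Type*} [AddCommGroup V] [Module ℝ V] (B : V → V → V)
    (κ : AlternatingMap ℝ V ℝ (Fin 4)) (v₀ v₁ v₂ v₃ v₄ : V) :
    ceDVal B κ ![v₀, v₁, v₂, v₃, v₄] =
      -κ ![B v₀ v₁, v₂, v₃, v₄] + κ ![B v₀ v₂, v₁, v₃, v₄] - κ ![B v₀ v₃, v₁, v₂, v₄]
      + κ ![B v₀ v₄, v₁, v₂, v₃] - κ ![B v₁ v₂, v₀, v₃, v₄] + κ ![B v₁ v₃, v₀, v₂, v₄]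
      - κ ![B v₁ v₄, v₀, v₂, v₃] - κ ![B v₂ v₃, v₀, v₁, v₄] + κ ![B v₂ v₄, v₀, v₁, v₃]
      - κ ![B v₃ v₄, v₀, v₁, v₂] := by
  simp +decide [ceDVal, Fin.sum_univ_succ, Fin.cons_eq_vec_four, Fin.succAbove]
  ring

-- `𝐞 i` is the basis vector numbered `i + 1` in the informal statement.
local notation "𝐞" i:max => (Pi.single i (1 : ℝ) : Fin 7 → ℝ)

theorem brkG2_eq (x y : Fin 7 → ℝ) :
    brkG2 x y = (x 2 * y 1 - x 1 * y 2) • 𝐞 4 + (x 3 * y 2 - x 2 * y 3) • 𝐞 5 +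
      (x 5 * y 2 - x 2 * y 5) • 𝐞 6 := by
  ext i; fin_cases i <;> simp [brkG2]

attribute [local simp] ceDVal_five brkG2_eq AlternatingMap.map_vecCons_zero
  AlternatingMap.map_vecCons_neg AlternatingMap.map_vec_four_single_eq_zero

theorem contraction_apply_single_eq_zero_of_closed
    (κ : AlternatingMap ℝ (Fin 7 → ℝ) ℝ (Fin 4))
    (hκ : ∀ x : Fin 5 → (Fin 7 → ℝ), ceDVal brkG2 κ x = 0) {i j : Fin 7} (hi : i ≠ 2)
    (hj : j ≠ 2) : (κ.curryLeft (𝐞 6)).curryLeft (𝐞 4) ![𝐞 i, 𝐞 j] = 0 := by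
  set β := (κ.curryLeft (𝐞 6)).curryLeft (𝐞 4)
  suffices h : ∀ i j : Fin 7, i < j → i ≠ 2 → j ≠ 2 → β ![𝐞 i, 𝐞 j] = 0 by
    rcases lt_trichotomy i j with hij | rfl | hij
    · exact h i j hij hi hj
    · exact β.map_vec_two_self _
    · rw [β.map_vec_two_swap, h j i hij hj hi, neg_zero]
  -- In each quintuple exactly one bracket yields a term of `dκ` with four distinct entries.
  have h01 : κ ![𝐞 6, 𝐞 4, 𝐞 0, 𝐞 1] = 0 := by
    simpa (disch := decide) using hκ ![𝐞 4, 𝐞 0, 𝐞 1, 𝐞 2, 𝐞 5]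
  have h03 : κ ![𝐞 6, 𝐞 4, 𝐞 0, 𝐞 3] = 0 := by
    simpa (disch := decide) using hκ ![𝐞 4, 𝐞 0, 𝐞 3, 𝐞 2, 𝐞 5]
  have h13 : κ ![𝐞 6, 𝐞 4, 𝐞 1, 𝐞 3] = 0 := by
    simpa (disch := decide) using hκ ![𝐞 4, 𝐞 1, 𝐞 3, 𝐞 2, 𝐞 5]
  have h05 : κ ![𝐞 6, 𝐞 4, 𝐞 0, 𝐞 5] = 0 := by
    rw [κ.map_vec_four_rotate, neg_eq_zero]
    simpa (disch := decide) using hκ ![𝐞 6, 𝐞 4, 𝐞 0, 𝐞 2, 𝐞 3]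
  have h15 : κ ![𝐞 6, 𝐞 4, 𝐞 1, 𝐞 5] = 0 := by
    rw [κ.map_vec_four_rotate, neg_eq_zero]
    simpa (disch := decide) using hκ ![𝐞 6, 𝐞 4, 𝐞 1, 𝐞 2, 𝐞 3]
  have h35 : κ ![𝐞 6, 𝐞 4, 𝐞 3, 𝐞 5] = 0 := by
    rw [← neg_eq_zero, ← κ.map_vec_four_rotate]
    simpa (disch := decide) using hκ ![𝐞 3, 𝐞 5, 𝐞 6, 𝐞 1, 𝐞 2]
  intro i j hij hi hj
  fin_cases i <;> fin_cases j <;>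
    simp (disch := decide) [β, h01, h03, h13, h05, h15, h35] at hij hi hj ⊢

/-- On `g₂ = (0,0,0,0,23,34,36)`, every closed 4-form `κ` satisfies
`(ι_{e₅} ι_{e₇} κ)² = 0`. -/
theorem g2_closed_four_form_contraction_sq_zero
    (κ : AlternatingMap ℝ (Fin 7 → ℝ) ℝ (Fin 4))
    (hκ : ∀ x : Fin 5 → (Fin 7 → ℝ), ceDVal brkG2 κ x = 0) :
    ∀ x : Fin 4 → (Fin 7 → ℝ),
      wedgeVal ((κ.curryLeft (Pi.single 6 1)).curryLeft (Pi.single 4 1))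
        ((κ.curryLeft (Pi.single 6 1)).curryLeft (Pi.single 4 1)) x = 0 := by
  set β := (κ.curryLeft (𝐞 6)).curryLeft (𝐞 4)
  refine wedgeVal_self_eq_zero β (fun v => v 2) (fun v => β ![𝐞 2, v]) fun a b => ?_
  rw [β.map_vec_two_eq_of_map_single_eq_zero 2
    (fun _ _ => contraction_apply_single_eq_zero_of_closed κ hκ) a b, smul_eq_mul, smul_eq_mul]

end
end

section
/- On the 7-dimensional nilpotent Lie algebra 27B = (0,0,0,0,0,12+34,15+23), every closed 4-form β satisfies (ι_{e₆} ι_{e₇} β)² = 0. -/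
open scoped BigOperators

noncomputable section

/-- The Lie bracket of `27B = (0,0,0,0,0,12+34,15+23)` on `ℝ⁷` (so `de⁶ = e¹² + e³⁴`,
`de⁷ = e¹⁵ + e²³`, `deⁱ = 0` for `i ≤ 5`). -/
def brk27B : (Fin 7 → ℝ) → (Fin 7 → ℝ) → (Fin 7 → ℝ) := fun x y =>
  ![0, 0, 0, 0, 0, -((x 0 * y 1 - x 1 * y 0) + (x 2 * y 3 - x 3 * y 2)),
    -((x 0 * y 4 - x 4 * y 0) + (x 1 * y 2 - x 2 * y 1))]

/-!
Split off `e⁶` and `e⁷`: `β = γ ∧ e⁶⁷ + (terms containing at most one of e⁶, e⁷)`, where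
`γ = ι_{e₆} ι_{e₇} β` lives on `⟨e¹, …, e⁵⟩`. Since `e₆, e₇` are central and `de⁶, de⁷` are the
only nonzero differentials, the parts of `dβ` containing exactly one of `e⁶, e⁷` are `±γ ∧ de⁷`
and `±γ ∧ de⁶`, so closedness gives `γ ∧ de⁶ = γ ∧ de⁷ = 0`. On `Λ²⟨e¹, …, e⁵⟩` these ten
linear conditions have rank nine, with kernel spanned by `e¹³`. Hence `γ = c e¹³` and `γ ∧ γ = 0`.
-/

section AlternatingForms

variable {R M N : Type*} [CommRing R] [AddCommGroup M] [Module R M] [AddCommGroup N] [Module R N]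

theorem AlternatingMap.map_vecCons_rotate (κ : M [⋀^Fin 4]→ₗ[R] N) (w a b z : M) :
    κ ![w, a, b, z] = κ ![w, z, a, b] := by
  have h : ![w, a, b, z] =
      ![w, z, a, b] ∘ ⇑(Equiv.swap 1 2 * Equiv.swap 2 3 : Equiv.Perm (Fin 4)) := by
    ext i; fin_cases i <;> rfl
  rw [h, κ.map_perm]
  simp [Equiv.Perm.sign_mul]

theorem AlternatingMap.map_vecCons_swap_ends (κ : M [⋀^Fin 4]→ₗ[R] N) (w a b z : M) :
    κ ![z, a, b, w] = -κ ![w, a, b, z] := by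
  have h : ![z, a, b, w] = ![w, a, b, z] ∘ Equiv.swap 0 3 := by
    ext i; fin_cases i <;> rfl
  rw [h, κ.map_swap _ (by decide)]

theorem AlternatingMap.map_vecCons_ends_eq (κ : M [⋀^Fin 4]→ₗ[R] N) (w a b : M) :
    κ ![w, a, b, w] = 0 :=
  κ.map_eq_zero_of_eq _ (show ![w, a, b, w] 0 = ![w, a, b, w] 3 from rfl) (by decide)

theorem Module.Basis.ext_alternating_fin_two {ι : Type*} [LinearOrder ι]
    {f g : M [⋀^Fin 2]→ₗ[R] N} (e : Module.Basis ι R M)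
    (h : ∀ i j, i < j → f ![e i, e j] = g ![e i, e j]) : f = g := by
  refine e.ext_alternating fun v hv => ?_
  have hv' : (fun k => e (v k)) = ![e (v 0), e (v 1)] := by ext k; fin_cases k <;> rfl
  rw [hv']
  rcases lt_trichotomy (v 0) (v 1) with hlt | heq | hgt
  · exact h _ _ hlt
  · exact absurd (hv heq) (by decide)
  · have hswap : ![e (v 0), e (v 1)] = ![e (v 1), e (v 0)] ∘ Equiv.swap 0 1 := by
      ext k; fin_cases k <;> rfl
    rw [hswap, f.map_swap _ (by decide), g.map_swap _ (by decide), h _ _ hgt]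

end AlternatingForms

theorem sum_perm_sign_mul_prod_eq_zero {R ι ι' : Type*} [CommRing R] [Fintype ι] [DecidableEq ι]
    (x : ι → ι' → R) (c : ι → ι') {i j : ι} (hij : i ≠ j) (hc : c i = c j) :
    ∑ σ : Equiv.Perm ι, ((Equiv.Perm.sign σ : ℤ) : R) * ∏ k, x (σ k) (c k) = 0 := by
  have h := Matrix.det_zero_of_column_eq (M := Matrix.of fun a b => x a (c b)) hij
    (fun k => by simp [hc])
  rw [Matrix.det_apply] at h
  simpa [Units.smul_def, zsmul_eq_mul] using h

theorem eForm_two_apply {n : ℕ} (S : Fin 2 → Fin n) (v : Fin 2 → Fin n → ℝ) :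
    eForm S v = v 0 (S 0) * v 1 (S 1) - v 1 (S 0) * v 0 (S 1) := by
  change Matrix.det (Matrix.of fun i j => v i (S j)) = _
  rw [Matrix.det_fin_two]
  simp only [Matrix.of_apply]
  ring

section Wedge

variable {V : Type*} [AddCommGroup V] [Module ℝ V]

theorem wedgeVal_smul_left {p q : ℕ} (c : ℝ) (α : AlternatingMap ℝ V ℝ (Fin p))
    (β : AlternatingMap ℝ V ℝ (Fin q)) (x : Fin (p + q) → V) :
    wedgeVal (c • α) β x = c * wedgeVal α β x := by
  simp only [wedgeVal, AlternatingMap.smul_apply, smul_eq_mul, Finset.mul_sum]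
  exact Finset.sum_congr rfl fun σ _ => by ring

theorem wedgeVal_smul_right {p q : ℕ} (c : ℝ) (α : AlternatingMap ℝ V ℝ (Fin p))
    (β : AlternatingMap ℝ V ℝ (Fin q)) (x : Fin (p + q) → V) :
    wedgeVal α (c • β) x = c * wedgeVal α β x := by
  simp only [wedgeVal, AlternatingMap.smul_apply, smul_eq_mul, Finset.mul_sum]
  exact Finset.sum_congr rfl fun σ _ => by ring

/-- `(ω ∧ γ)(u₀, u₁, u₂, u₃)`, as a sum over the six `(2,2)`-shuffles. -/
def wedgeTwoTwo (ω γ : AlternatingMap ℝ V ℝ (Fin 2)) (u₀ u₁ u₂ u₃ : V) : ℝ :=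
  ω ![u₀, u₁] * γ ![u₂, u₃] - ω ![u₀, u₂] * γ ![u₁, u₃] + ω ![u₀, u₃] * γ ![u₁, u₂]
    + ω ![u₁, u₂] * γ ![u₀, u₃] - ω ![u₁, u₃] * γ ![u₀, u₂] + ω ![u₂, u₃] * γ ![u₀, u₁]

end Wedge

theorem wedgeVal_eForm_two_self {n : ℕ} (S : Fin 2 → Fin n) (x : Fin 4 → Fin n → ℝ) :
    wedgeVal (eForm S) (eForm S) x = 0 := by
  set D : (Fin 4 → Fin n) → ℝ := fun c =>
    ∑ σ : Equiv.Perm (Fin 4), ((Equiv.Perm.sign σ : ℤ) : ℝ) * ∏ k, x (σ k) (c k)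
  have hD₂ {c} (h : c 0 = c 2) : D c = 0 := sum_perm_sign_mul_prod_eq_zero x c (by decide) h
  have hD₃ {c} (h : c 0 = c 3) : D c = 0 := sum_perm_sign_mul_prod_eq_zero x c (by decide) h
  have expand : wedgeVal (eForm S) (eForm S) x = (2 * 2 : ℝ)⁻¹ *
      (D ![S 0, S 1, S 0, S 1] - D ![S 1, S 0, S 0, S 1] - D ![S 0, S 1, S 1, S 0]
        + D ![S 1, S 0, S 1, S 0]) := by
    simp only [wedgeVal, eForm_two_apply, D, ← Finset.sum_sub_distrib, ← Finset.sum_add_distrib,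
      Fin.prod_univ_four]
    norm_num
    refine Finset.sum_congr rfl fun σ _ => ?_
    simp
    ring
  rw [expand, hD₂ rfl, hD₃ rfl, hD₃ rfl, hD₂ rfl]
  ring

theorem Fin.cons_eq_vecCons_three {α : Type*} (a : α) (f : Fin 3 → α) :
    (Fin.cons a f : Fin 4 → α) = ![a, f 0, f 1, f 2] := by
  ext i; fin_cases i <;> rfl

section ChevalleyEilenberg

variable {V : Type*} [AddCommGroup V] [Module ℝ V] (B : V → V → V)
  (κ : AlternatingMap ℝ V ℝ (Fin 4))

theorem ceDVal_fin_four (x : Fin 5 → V) :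
    ceDVal B κ x =
      -κ ![B (x 0) (x 1), x 2, x 3, x 4] + κ ![B (x 0) (x 2), x 1, x 3, x 4]
        - κ ![B (x 0) (x 3), x 1, x 2, x 4] + κ ![B (x 0) (x 4), x 1, x 2, x 3]
        - κ ![B (x 1) (x 2), x 0, x 3, x 4] + κ ![B (x 1) (x 3), x 0, x 2, x 4]
        - κ ![B (x 1) (x 4), x 0, x 2, x 3] - κ ![B (x 2) (x 3), x 0, x 1, x 4]
        + κ ![B (x 2) (x 4), x 0, x 1, x 3] - κ ![B (x 3) (x 4), x 0, x 1, x 2] := by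
  simp [ceDVal, Fin.sum_univ_five, Fin.sum_univ_four, Fin.cons_eq_vecCons_three, Fin.succAbove]
  ring

theorem ceDVal_fin_four_of_bracket_right_eq_zero {z : V} (hz : ∀ u, B u z = 0)
    (u₀ u₁ u₂ u₃ : V) :
    ceDVal B κ ![u₀, u₁, u₂, u₃, z] =
      -κ ![B u₀ u₁, u₂, u₃, z] + κ ![B u₀ u₂, u₁, u₃, z] - κ ![B u₀ u₃, u₁, u₂, z]
        - κ ![B u₁ u₂, u₀, u₃, z] + κ ![B u₁ u₃, u₀, u₂, z] - κ ![B u₂ u₃, u₀, u₁, z] := by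
  have h0 (a b c : V) : κ ![0, a, b, c] = 0 := κ.map_coord_zero 0 rfl
  rw [ceDVal_fin_four]
  simp only [Matrix.cons_val, hz, h0]
  ring

end ChevalleyEilenberg

namespace B27

/-- `de⁶ = e¹² + e³⁴` and `de⁷ = e¹⁵ + e²³`; the coordinates of `Fin 7 → ℝ` are 0-based. -/
def de6 : AlternatingMap ℝ (Fin 7 → ℝ) ℝ (Fin 2) := eForm ![0, 1] + eForm ![2, 3]

def de7 : AlternatingMap ℝ (Fin 7 → ℝ) ℝ (Fin 2) := eForm ![0, 4] + eForm ![1, 2]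

/-- `ι_{e₆} ι_{e₇} β`, with `e₆ = Pi.single 5 1` and `e₇ = Pi.single 6 1`. -/
def iota67 (β : AlternatingMap ℝ (Fin 7 → ℝ) ℝ (Fin 4)) : AlternatingMap ℝ (Fin 7 → ℝ) ℝ (Fin 2) :=
  (β.curryLeft (Pi.single 6 1)).curryLeft (Pi.single 5 1)

theorem brk27B_eq (u v : Fin 7 → ℝ) :
    brk27B u v = -de6 ![u, v] • Pi.single 5 1 - de7 ![u, v] • Pi.single 6 1 := by
  ext j
  fin_cases j <;> simp [brk27B, de6, de7, eForm_two_apply] <;> ring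

theorem brk27B_single_five (u : Fin 7 → ℝ) : brk27B u (Pi.single 5 1) = 0 := by
  ext j; fin_cases j <;> simp [brk27B]

theorem brk27B_single_six (u : Fin 7 → ℝ) : brk27B u (Pi.single 6 1) = 0 := by
  ext j; fin_cases j <;> simp [brk27B]

section Closed

variable (β : AlternatingMap ℝ (Fin 7 → ℝ) ℝ (Fin 4))

theorem ceDVal_brk27B_single_five (u₀ u₁ u₂ u₃ : Fin 7 → ℝ) :
    ceDVal brk27B β ![u₀, u₁, u₂, u₃, Pi.single 5 1] = wedgeTwoTwo de7 (iota67 β) u₀ u₁ u₂ u₃ := by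
  have hbracket (a b c d : Fin 7 → ℝ) :
      β ![brk27B a b, c, d, Pi.single 5 1] = -de7 ![a, b] * iota67 β ![c, d] := by
    rw [brk27B_eq, ← AlternatingMap.curryLeft_apply_apply]
    simp only [map_sub, map_smul, AlternatingMap.sub_apply, AlternatingMap.smul_apply,
      AlternatingMap.curryLeft_apply_apply, β.map_vecCons_ends_eq, smul_eq_mul]
    rw [β.map_vecCons_rotate]
    simp [iota67]
  rw [ceDVal_fin_four_of_bracket_right_eq_zero _ _ brk27B_single_five]
  simp only [hbracket, wedgeTwoTwo]
  ring

theorem ceDVal_brk27B_single_six (u₀ u₁ u₂ u₃ : Fin 7 → ℝ) :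
    ceDVal brk27B β ![u₀, u₁, u₂, u₃, Pi.single 6 1] = -wedgeTwoTwo de6 (iota67 β) u₀ u₁ u₂ u₃ := by
  have hbracket (a b c d : Fin 7 → ℝ) :
      β ![brk27B a b, c, d, Pi.single 6 1] = de6 ![a, b] * iota67 β ![c, d] := by
    rw [brk27B_eq, ← AlternatingMap.curryLeft_apply_apply]
    simp only [map_sub, map_smul, AlternatingMap.sub_apply, AlternatingMap.smul_apply,
      AlternatingMap.curryLeft_apply_apply, β.map_vecCons_ends_eq, smul_eq_mul]
    rw [β.map_vecCons_swap_ends, β.map_vecCons_rotate]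
    simp [iota67]
  rw [ceDVal_fin_four_of_bracket_right_eq_zero _ _ brk27B_single_six]
  simp only [hbracket, wedgeTwoTwo]
  ring

theorem eq_smul_eForm_of_wedgeTwoTwo_de6_de7 (γ : AlternatingMap ℝ (Fin 7 → ℝ) ℝ (Fin 2))
    (h5 : ∀ u, γ ![u, Pi.single 5 1] = 0) (h6 : ∀ u, γ ![u, Pi.single 6 1] = 0)
    (hd6 : ∀ u₀ u₁ u₂ u₃, wedgeTwoTwo de6 γ u₀ u₁ u₂ u₃ = 0)
    (hd7 : ∀ u₀ u₁ u₂ u₃, wedgeTwoTwo de7 γ u₀ u₁ u₂ u₃ = 0) :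
    γ = γ ![Pi.single 0 1, Pi.single 2 1] • eForm ![0, 2] := by
  have e6 (a b c d : Fin 7) := hd6 (Pi.single a 1) (Pi.single b 1) (Pi.single c 1) (Pi.single d 1)
  have e7 (a b c d : Fin 7) := hd7 (Pi.single a 1) (Pi.single b 1) (Pi.single c 1) (Pi.single d 1)
  simp only [wedgeTwoTwo, de6, de7, AlternatingMap.add_apply, eForm_two_apply] at e6 e7
  have h03 := e7 0 1 2 3
  have h12_04 := e7 0 1 2 4
  have h13 := e7 0 1 3 4
  have h23 := e7 0 2 3 4
  have h34 := e7 1 2 3 4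
  have h01_23 := e6 0 1 2 3
  have h24 := e6 0 1 2 4
  have h04 := e6 0 2 3 4
  have h14 := e6 1 2 3 4
  simp at h03 h12_04 h13 h23 h34 h01_23 h24 h04 h14
  rw [h04, add_zero] at h12_04
  rw [h23, zero_add] at h01_23
  clear e6 e7 hd6 hd7
  refine (Pi.basisFun ℝ (Fin 7)).ext_alternating_fin_two fun i j hij => ?_
  simp only [Pi.basisFun_apply, AlternatingMap.smul_apply, eForm_two_apply, smul_eq_mul]
  fin_cases i <;> fin_cases j <;>
    simp [h03, h12_04, h13, h23, h34, h01_23, h24, h04, h14, h5, h6] at hij ⊢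

theorem iota67_eq_smul_eForm_of_closed (hβ : ∀ x, ceDVal brk27B β x = 0) :
    iota67 β = iota67 β ![Pi.single 0 1, Pi.single 2 1] • eForm ![0, 2] := by
  refine eq_smul_eForm_of_wedgeTwoTwo_de6_de7 _ (fun u => ?_) (fun u => ?_)
    (fun u₀ u₁ u₂ u₃ => ?_) (fun u₀ u₁ u₂ u₃ => ?_)
  · exact β.map_eq_zero_of_eq ![_, _, u, _] (i := 1) (j := 3) rfl (by decide)
  · exact β.map_vecCons_ends_eq _ _ _
  · rw [← neg_eq_zero, ← ceDVal_brk27B_single_six, hβ]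
  · rw [← ceDVal_brk27B_single_five, hβ]

end Closed

end B27

/-- On `27B = (0,0,0,0,0,12+34,15+23)`, every closed 4-form `β`
satisfies `(ι_{e₆} ι_{e₇} β)² = 0`. -/
theorem b27_closed_four_form_contraction_sq_zero
    (β : AlternatingMap ℝ (Fin 7 → ℝ) ℝ (Fin 4))
    (hβ : ∀ x : Fin 5 → (Fin 7 → ℝ), ceDVal brk27B β x = 0) :
    ∀ x : Fin 4 → (Fin 7 → ℝ),
      wedgeVal ((β.curryLeft (Pi.single 6 1)).curryLeft (Pi.single 5 1))
        ((β.curryLeft (Pi.single 6 1)).curryLeft (Pi.single 5 1)) x = 0 := by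
  intro x
  change wedgeVal (B27.iota67 β) (B27.iota67 β) x = 0
  rw [B27.iota67_eq_smul_eForm_of_closed β hβ, wedgeVal_smul_left, wedgeVal_smul_right,
    wedgeVal_eForm_two_self, mul_zero, mul_zero]

end
end

section
/- On the 7-dimensional Heisenberg Lie algebra 17 = (0,0,0,0,0,0,12+34+56), the 4-form φ = e¹²³⁴ + e¹²⁵⁶ + e¹³⁶⁷ + e¹⁴⁵⁷ + e²³⁵⁷ − e²⁴⁶⁷ + e³⁴⁵⁶ is closed with respect to the Chevalley–Eilenberg differential; hence this Lie algebra admits a coclosed G₂-structure. -/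
open scoped BigOperators

noncomputable section

/-- The Lie bracket of the 7-dimensional Heisenberg Lie algebra
`17 = (0,0,0,0,0,0,12+34+56)` on `ℝ⁷` (so `de⁷ = e¹² + e³⁴ + e⁵⁶`, `deⁱ = 0` for `i ≤ 6`). -/
def brk17 : (Fin 7 → ℝ) → (Fin 7 → ℝ) → (Fin 7 → ℝ) := fun x y =>
  ![0, 0, 0, 0, 0, 0,
    -((x 0 * y 1 - x 1 * y 0) + (x 2 * y 3 - x 3 * y 2) + (x 4 * y 5 - x 5 * y 4))]

/-! The Chevalley–Eilenberg differential only sees brackets, and every bracket of `17` is a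
multiple of `e₇`. Hence a basis form `e^S` without `e⁷` is closed, while the differential of
`e^{abc7}` is, up to sign, `e^{abc} ∧ (e¹² + e³⁴ + e⁵⁶)`. In each of the four terms of `φ`
containing `e⁷`, the indices `a, b, c` take exactly one element from each of the pairs
`{1,2}, {3,4}, {5,6}`, so every summand of this wedge has a repeated index and vanishes.
In the code indices are `0`-based, so `e⁷` is the coordinate `6`. -/

section ChevalleyEilenberg

variable {V : Type*} [AddCommGroup V] [Module ℝ V] (B : V → V → V)

theorem ceDVal_add {k : ℕ} (κ₁ κ₂ : AlternatingMap ℝ V ℝ (Fin (k + 1))) (x : Fin (k + 2) → V) :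
    ceDVal B (κ₁ + κ₂) x = ceDVal B κ₁ x + ceDVal B κ₂ x := by
  simp only [ceDVal, ← Finset.sum_add_distrib]
  refine Finset.sum_congr rfl fun i _ => Finset.sum_congr rfl fun m _ => ?_
  split_ifs <;> simp [mul_add]

theorem ceDVal_sub {k : ℕ} (κ₁ κ₂ : AlternatingMap ℝ V ℝ (Fin (k + 1))) (x : Fin (k + 2) → V) :
    ceDVal B (κ₁ - κ₂) x = ceDVal B κ₁ x - ceDVal B κ₂ x := by
  simp only [ceDVal, ← Finset.sum_sub_distrib]
  refine Finset.sum_congr rfl fun i _ => Finset.sum_congr rfl fun m _ => ?_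
  split_ifs <;> simp [mul_sub]

theorem ceDVal_eq_zero_of_apply_cons_bracket {k : ℕ} (κ : AlternatingMap ℝ V ℝ (Fin (k + 1)))
    (h : ∀ u v (w : Fin k → V), κ (Fin.cons (B u v) w) = 0) (x : Fin (k + 2) → V) :
    ceDVal B κ x = 0 := by
  simp [ceDVal, h]

theorem ceDVal_four (κ : AlternatingMap ℝ V ℝ (Fin 4)) (x : Fin 5 → V) :
    ceDVal B κ x =
      -κ (Fin.cons (B (x 0) (x 1)) ![x 2, x 3, x 4])
      + κ (Fin.cons (B (x 0) (x 2)) ![x 1, x 3, x 4])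
      - κ (Fin.cons (B (x 0) (x 3)) ![x 1, x 2, x 4])
      + κ (Fin.cons (B (x 0) (x 4)) ![x 1, x 2, x 3])
      - κ (Fin.cons (B (x 1) (x 2)) ![x 0, x 3, x 4])
      + κ (Fin.cons (B (x 1) (x 3)) ![x 0, x 2, x 4])
      - κ (Fin.cons (B (x 1) (x 4)) ![x 0, x 2, x 3])
      - κ (Fin.cons (B (x 2) (x 3)) ![x 0, x 1, x 4])
      + κ (Fin.cons (B (x 2) (x 4)) ![x 0, x 1, x 3])
      - κ (Fin.cons (B (x 3) (x 4)) ![x 0, x 1, x 2]) := by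
  have htuple : ∀ (i : Fin 5) (m : Fin 4),
      (fun l : Fin 3 => x (i.succAbove (m.succAbove l))) =
        ![x (i.succAbove (m.succAbove 0)), x (i.succAbove (m.succAbove 1)),
          x (i.succAbove (m.succAbove 2))] := fun i m => by
    funext l; fin_cases l <;> rfl
  have h2 : ((Fin.castSucc 2).castSucc : Fin 5) = 2 := rfl
  have h3 : (Fin.succ 2 : Fin 5) = 3 := rfl
  have h3' : ((Fin.castSucc 2).succ : Fin 5) = 3 := rfl
  have h4 : ((Fin.succ 2).succ : Fin 5) = 4 := rfl
  simp only [ceDVal, Fin.sum_univ_succ, Fin.sum_univ_zero, htuple]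
  norm_num [Fin.succAbove, Fin.lt_def, h2, h3, h3', h4]
  ring

end ChevalleyEilenberg

section BasisForms

variable {n k : ℕ}

theorem eForm_apply (S : Fin k → Fin n) (v : Fin k → Fin n → ℝ) :
    eForm S v = (Matrix.of fun i j => v i (S j)).det := rfl

theorem eForm_cons_eq_zero (S : Fin (k + 1) → Fin n) {y : Fin n → ℝ} (hy : ∀ j, y (S j) = 0)
    (w : Fin k → Fin n → ℝ) : eForm S (Fin.cons y w) = 0 :=
  Matrix.det_eq_zero_of_row_eq_zero 0 fun j => hy j

theorem eForm_snoc_cons (S : Fin k → Fin n) (p : Fin n) {y : Fin n → ℝ}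
    (hy : ∀ j, y (S j) = 0) (w : Fin k → Fin n → ℝ) :
    eForm (Fin.snoc S p) (Fin.cons y w) = (-1) ^ k * y p * eForm S w := by
  rw [eForm_apply, Matrix.det_succ_row_zero, Fin.sum_univ_castSucc]
  simp only [Matrix.of_apply, Fin.cons_zero, Fin.snoc_castSucc, hy, Fin.snoc_last,
    Fin.succAbove_last, mul_zero, zero_mul, Finset.sum_const_zero, zero_add, Fin.val_last]
  congr 2
  ext i j
  simp

end BasisForms

section Heisenberg

theorem brk17_apply_of_ne_six (u v : Fin 7 → ℝ) {j : Fin 7} (hj : j ≠ 6) :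
    brk17 u v j = 0 := by
  fin_cases j <;> first | rfl | exact absurd rfl hj

theorem ceDVal_brk17_eForm_of_ne_six {k : ℕ} (S : Fin (k + 1) → Fin 7) (hS : ∀ j, S j ≠ 6)
    (x : Fin (k + 2) → Fin 7 → ℝ) : ceDVal brk17 (eForm S) x = 0 :=
  ceDVal_eq_zero_of_apply_cons_bracket _ _
    (fun u v w => eForm_cons_eq_zero S (fun j => brk17_apply_of_ne_six u v (hS j)) w) x

theorem ceDVal_brk17_eForm_six_of_pairs {a b c : Fin 7} (ha : a = 0 ∨ a = 1)
    (hb : b = 2 ∨ b = 3) (hc : c = 4 ∨ c = 5) (x : Fin 5 → Fin 7 → ℝ) :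
    ceDVal brk17 (eForm ![a, b, c, 6]) x = 0 := by
  have hsnoc : (![a, b, c, 6] : Fin 4 → Fin 7) = Fin.snoc ![a, b, c] 6 := by
    funext i; fin_cases i <;> rfl
  have hne : ∀ j, (![a, b, c] : Fin 3 → Fin 7) j ≠ 6 := by
    intro j; fin_cases j <;> simp <;> omega
  rw [hsnoc, ceDVal_four]
  simp only [eForm_snoc_cons _ _ (fun j => brk17_apply_of_ne_six _ _ (hne j))]
  rcases ha with rfl | rfl <;> rcases hb with rfl | rfl <;> rcases hc with rfl | rfl <;>
  · simp [brk17, eForm_apply, Matrix.det_fin_three]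
    ring

end Heisenberg

theorem psiStdB_basisFun : psiStdB (Pi.basisFun ℝ (Fin 7)) = psiStd := by
  ext v
  simp [psiStdB, Pi.basisFun_equivFun]

/-- On the Heisenberg Lie algebra `17 = (0,0,0,0,0,0,12+34+56)`, the 4-form
`φ = e¹²³⁴+e¹²⁵⁶+e¹³⁶⁷+e¹⁴⁵⁷+e²³⁵⁷−e²⁴⁶⁷+e³⁴⁵⁶` is closed for the Chevalley–Eilenberg
differential; hence this Lie algebra admits a coclosed `G₂`-structure. -/
theorem heisenberg_std_four_form_closed :
    (∀ x : Fin 5 → (Fin 7 → ℝ), ceDVal brk17 psiStd x = 0) ∧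
    ∃ b : Module.Basis (Fin 7) ℝ (Fin 7 → ℝ),
      ∀ x : Fin 5 → (Fin 7 → ℝ), ceDVal brk17 (psiStdB b) x = 0 := by
  have hψ : ∀ x, ceDVal brk17 psiStd x = 0 := by
    intro x
    simp only [psiStd, ceDVal_add, ceDVal_sub]
    rw [ceDVal_brk17_eForm_of_ne_six ![0, 1, 2, 3] (by decide),
      ceDVal_brk17_eForm_of_ne_six ![0, 1, 4, 5] (by decide),
      ceDVal_brk17_eForm_of_ne_six ![2, 3, 4, 5] (by decide),
      ceDVal_brk17_eForm_six_of_pairs (.inl rfl) (.inl rfl) (.inr rfl),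
      ceDVal_brk17_eForm_six_of_pairs (.inl rfl) (.inr rfl) (.inl rfl),
      ceDVal_brk17_eForm_six_of_pairs (.inr rfl) (.inl rfl) (.inl rfl),
      ceDVal_brk17_eForm_six_of_pairs (.inr rfl) (.inr rfl) (.inr rfl)]
    norm_num
  exact ⟨hψ, Pi.basisFun ℝ (Fin 7), psiStdB_basisFun ▸ hψ⟩

end
end

section
/- Let g be a 7-dimensional Lie algebra with nontrivial center, φ a coclosed G₂-structure on g with dual 4-form φ̂ = ⋆_φ φ, and X a unit central vector. Then the 3-form ψ₋ = −ι_X φ̂, viewed on the quotient h = g/⟨X⟩, is closed with respect to the Chevalley–Eilenberg differential of h. -/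
open scoped BigOperators

noncomputable section

/-!
Since `X` is central, `ad_X = 0`, so Cartan's formula `L_X = d ι_X + ι_X d` for the
Chevalley–Eilenberg differential reduces to `d (-ι_X φ̂) = ι_X dφ̂`, which vanishes because `φ̂`
is closed. The pullback along the Lie algebra morphism `π` commutes with `d`, and it is injective
on forms because `π` is surjective, so the form on `h` is closed as well.
-/

theorem AlternatingMap.map_cons_cons_swap {R M N : Type*} [Semiring R] [AddCommMonoid M]
    [Module R M] [AddCommGroup N] [Module R N] {n : ℕ} (ψ : M [⋀^Fin (n + 2)]→ₗ[R] N)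
    (v w : M) (f : Fin n → M) :
    ψ (Fin.cons v (Fin.cons w f)) = -ψ (Fin.cons w (Fin.cons v f)) := by
  have h : (Fin.cons w (Fin.cons v f) : Fin (n + 2) → M) ∘ Equiv.swap 0 1 =
      Fin.cons v (Fin.cons w f) := by
    funext t
    refine Fin.cases ?_ (Fin.cases ?_ fun t => ?_) t
    · simp
    · simp [Equiv.swap_apply_right]
    · rw [Function.comp_apply, Equiv.swap_apply_of_ne_of_ne] <;> simp [Fin.ext_iff]
  rw [← h, ψ.map_swap _ (by simp)]

section ChevalleyEilenberg

variable {V : Type*} [AddCommGroup V] [Module ℝ V]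

theorem ceDVal_compLinearMap {W : Type*} [AddCommGroup W] [Module ℝ W]
    (B : V → V → V) (B' : W → W → W) (f : V →ₗ[ℝ] W) (hf : ∀ u v, f (B u v) = B' (f u) (f v))
    {k : ℕ} (κ : AlternatingMap ℝ W ℝ (Fin (k + 1))) (x : Fin (k + 2) → V) :
    ceDVal B (κ.compLinearMap f) x = ceDVal B' κ (f ∘ x) := by
  unfold ceDVal
  refine Finset.sum_congr rfl fun i _ => Finset.sum_congr rfl fun m _ => ?_
  congr 3
  rw [AlternatingMap.compLinearMap_apply]
  congr 1
  funext t
  refine Fin.cases ?_ (fun t => ?_) t <;> simp [hf]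

theorem ceDVal_neg_curryLeft_of_forall_eq_zero (B : V → V → V) {k : ℕ}
    (ψ : AlternatingMap ℝ V ℝ (Fin (k + 2))) (X : V) (hX : ∀ v, B X v = 0)
    (y : Fin (k + 2) → V) :
    ceDVal B (-ψ.curryLeft X) y = ceDVal B ψ (Fin.cons X y) := by
  unfold ceDVal
  conv_rhs => rw [Fin.sum_univ_succ]
  simp only [Fin.cons_zero, Fin.cons_succ, Fin.succAbove_zero, hX, ψ.map_coord_zero 0, mul_zero,
    ite_self, Finset.sum_const_zero, zero_add]
  refine Finset.sum_congr rfl fun j _ => ?_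
  conv_rhs => rw [Fin.sum_univ_succ, if_neg (by simp), zero_add]
  refine Finset.sum_congr rfl fun m _ => ?_
  have htail : (fun l => (Fin.cons X y : Fin (k + 3) → V) (j.succ.succAbove (m.succ.succAbove l))) =
      Fin.cons X fun l => y (j.succAbove (m.succAbove l)) := by
    funext l
    refine Fin.cases ?_ (fun l => ?_) l <;>
      simp only [Fin.succ_succAbove_zero, Fin.succ_succAbove_succ, Fin.cons_zero, Fin.cons_succ]
  simp only [Fin.val_succ, Fin.succ_succAbove_succ, Fin.cons_succ, add_le_add_iff_right, htail,
    ψ.map_cons_cons_swap _ X]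
  split_ifs
  · rw [AlternatingMap.neg_apply, AlternatingMap.curryLeft_apply_apply, Matrix.vecCons]
    ring
  · rfl

end ChevalleyEilenberg

theorem pushforward_contraction_closed_general
    (g : Type*) [LieRing g] [LieAlgebra ℝ g]
    (b : Module.Basis (Fin 7) ℝ g)
    (hcoclosed : ∀ x : Fin 5 → g, ceDVal (fun u v => ⁅u, v⁆) (psiStdB b) x = 0)
    (X : g) (hXcentral : ∀ y : g, ⁅X, y⁆ = 0)
    (h : Type*) [LieRing h] [LieAlgebra ℝ h]
    (π : g →ₗ⁅ℝ⁆ h) (hπ : Function.Surjective π)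
    (ν : AlternatingMap ℝ h ℝ (Fin 3))
    (hν : ∀ x : Fin 3 → g, ν (fun i => π (x i)) = -((psiStdB b).curryLeft X) x) :
    ∀ x : Fin 4 → h, ceDVal (fun u v => ⁅u, v⁆) ν x = 0 := by
  intro x
  choose y hy using fun i => hπ (x i)
  obtain rfl : x = π ∘ y := funext fun i => (hy i).symm
  have hpullback : ν.compLinearMap (π : g →ₗ[ℝ] h) = -(psiStdB b).curryLeft X :=
    AlternatingMap.ext hν
  rw [← LieHom.coe_toLinearMap, ← ceDVal_compLinearMap _ _ _ (fun u v => π.map_lie u v), hpullback,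
    ceDVal_neg_curryLeft_of_forall_eq_zero _ _ _ hXcentral]
  exact hcoclosed _

/-- Let `g` be a 7-dimensional Lie algebra with a coclosed `G₂`-structure
`φ` (in the orthonormal coframe dual to a basis `b`, `φ = phiStdB b` and its dual 4-form
`⋆_φ φ = psiStdB b` is closed), and let `X` be a central vector of unit length for the
induced metric `g_φ` (which makes `b` orthonormal).  If `π : g → h` is an epimorphism onto a
Lie algebra `h` with kernel `span X` (so `h ≅ g/⟨X⟩`), then the 3-form `ψ₋ = −ι_X ⋆_φ φ`,
viewed on `h` (i.e. any `ν` with `ν ∘ π = −ι_X ⋆_φ φ`), is closed for the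
Chevalley–Eilenberg differential of `h`. -/
theorem pushforward_contraction_closed
    (g : Type*) [LieRing g] [LieAlgebra ℝ g] [FiniteDimensional ℝ g]
    (h7 : Module.finrank ℝ g = 7)
    (b : Module.Basis (Fin 7) ℝ g)
    (hcoclosed : ∀ x : Fin 5 → g, ceDVal (fun u v => ⁅u, v⁆) (psiStdB b) x = 0)
    (X : g) (hXcentral : ∀ y : g, ⁅X, y⁆ = 0)
    (hXunit : ∑ i : Fin 7, (b.repr X i) ^ 2 = 1)
    (h : Type*) [LieRing h] [LieAlgebra ℝ h]
    (π : g →ₗ⁅ℝ⁆ h) (hπ : Function.Surjective π)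
    (hker : ∀ y : g, π y = 0 ↔ y ∈ Submodule.span ℝ ({X} : Set g))
    (ν : AlternatingMap ℝ h ℝ (Fin 3))
    (hν : ∀ x : Fin 3 → g, ν (fun i => π (x i)) = -((psiStdB b).curryLeft X) x) :
    ∀ x : Fin 4 → h, ceDVal (fun u v => ⁅u, v⁆) ν x = 0 :=
  pushforward_contraction_closed_general g b hcoclosed X hXcentral h π hπ ν hν

end
end
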